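/- Define f(i) = log(2k(k+1)/((2k+3−2i)(k+1−i))) / log(k(k+1)/(k+1−i)²) for real i ∈ [1,k]. At any critical point of f (where f′(i)=0), f(i) = (4k+5−4i)/(2(2k+3−2i)). Consequently max_{i∈[1,k]} f(i) ≤ (4k+1)/(4k+2). -/

import Mathlib

/-!
Write `f = u / v` with `u`, `v` the two logarithms. At a critical point `u' v = u v'`, so `f = u' / v'`, and this quotient of
derivatives is an explicit rational function of `i`.

For the bound put `b = k + 1 - i ∈ [1, k]`, so that `v > 0`. Then `(4k+2) u ≤ (4k+1) v` is the
logarithm of `2^(4k+2) k (k+1) b^(4k) ≤ (2b+1)^(4k+2)`. Since `(2b+1)/(2k+1)` is the mean of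
`b/k` and `1` with weights `4k` and `2`, concavity of `log` reduces this to the case `b = k`,
which follows from `4k(k+1) ≤ (2k+1)^2` and `2k ≤ 2k+1`.
-/

open Real

theorem HasDerivAt.log_const_div {g : ℝ → ℝ} {g' x c : ℝ} (hg : HasDerivAt g g' x) (hc : c ≠ 0)
    (hx : g x ≠ 0) : HasDerivAt (fun y => Real.log (c / g y)) (-g' / g x) x := by
  refine (((hasDerivAt_const x c).fun_div hg hx).log (div_ne_zero hc hx)).congr_deriv ?_
  field_simp
  ring

theorem div_eq_div_deriv_of_deriv_div_eq_zero {𝕜 : Type*} [NontriviallyNormedField 𝕜]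
    {u v : 𝕜 → 𝕜} {u' v' x : 𝕜} (hu : HasDerivAt u u' x) (hv : HasDerivAt v v' x)
    (hvx : v x ≠ 0) (hv' : v' ≠ 0) (h : deriv (fun y => u y / v y) x = 0) :
    u x / v x = u' / v' := by
  rw [(hu.fun_div hv hvx).deriv, div_eq_zero_iff, sub_eq_zero] at h
  rw [div_eq_div_iff hvx hv']
  rcases h with h | h
  · rw [← h, mul_comm]
  · exact absurd h (pow_ne_zero 2 hvx)

theorem mul_log_le_add_mul_log_weighted_mean {m n x : ℝ} (hm : 0 ≤ m) (hn : 0 < n)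
    (hx : 0 < x) : m * log x ≤ (m + n) * log ((m * x + n) / (m + n)) := by
  have hmn : 0 < m + n := by linarith
  have h := strictConcaveOn_log_Ioi.concaveOn.2 (Set.mem_Ioi.2 hx) (Set.mem_Ioi.2 one_pos)
    (div_nonneg hm hmn.le) (div_pos hn hmn).le (by field_simp)
  simp only [smul_eq_mul, log_one, mul_zero, add_zero, mul_one] at h
  calc m * log x = (m + n) * (m / (m + n) * log x) := by field_simp
    _ ≤ (m + n) * log (m / (m + n) * x + n / (m + n)) := by gcongr
    _ = (m + n) * log ((m * x + n) / (m + n)) := by congr 2; field_simp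

namespace LogRatio

noncomputable def num (k x : ℝ) : ℝ := log (2 * k * (k + 1) / ((2 * k + 3 - 2 * x) * (k + 1 - x)))

noncomputable def den (k x : ℝ) : ℝ := log (k * (k + 1) / (k + 1 - x) ^ 2)

variable {k x : ℝ}

theorem hasDerivAt_num (hk : 0 < k) (hx : x < k + 1) :
    HasDerivAt (num k) ((4 * k + 5 - 4 * x) / ((2 * k + 3 - 2 * x) * (k + 1 - x))) x := by
  have hg : HasDerivAt (fun y => (2 * k + 3 - 2 * y) * (k + 1 - y)) (-(4 * k + 5 - 4 * x)) x := by
    refine (((hasDerivAt_id x).const_mul 2).const_sub _).mul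
      ((hasDerivAt_id x).const_sub _) |>.congr_deriv ?_
    simp only [id]
    ring
  have h := hg.log_const_div (c := 2 * k * (k + 1)) (by positivity) (by nlinarith)
  rw [neg_neg] at h
  exact h

theorem hasDerivAt_den (hk : 0 < k) (hx : x < k + 1) :
    HasDerivAt (den k) (2 / (k + 1 - x)) x := by
  have hg : HasDerivAt (fun y => (k + 1 - y) ^ 2) (-(2 * (k + 1 - x))) x := by
    refine ((hasDerivAt_id x).const_sub _).pow 2 |>.congr_deriv ?_
    simp only [id]
    ring
  refine (hg.log_const_div (by positivity) (by nlinarith)).congr_deriv ?_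
  field_simp [(by linarith : k + 1 - x ≠ 0)]

theorem den_pos (hk : 0 < k) (hx₁ : 1 ≤ x) (hx : x < k + 1) : 0 < den k x := by
  have hb : 0 < k + 1 - x := by linarith
  exact log_pos ((one_lt_div (by positivity)).2 (by nlinarith))

theorem num_div_den_of_deriv_eq_zero (hk : 0 < k) (hx₁ : 1 ≤ x) (hx : x < k + 1)
    (h : deriv (fun y => num k y / den k y) x = 0) :
    num k x / den k x = (4 * k + 5 - 4 * x) / (2 * (2 * k + 3 - 2 * x)) := by
  have hb : 0 < k + 1 - x := by linarith
  rw [div_eq_div_deriv_of_deriv_div_eq_zero (hasDerivAt_num hk hx) (hasDerivAt_den hk hx)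
    (den_pos hk hx₁ hx).ne' (by positivity) h]
  have hc : 2 * k + 3 - 2 * x ≠ 0 := by linarith
  field_simp

theorem num_eq (hk : 0 < k) (hx : x < k + 1) :
    num k x = log 2 + log k + log (k + 1) - log (2 * (k + 1 - x) + 1) - log (k + 1 - x) := by
  have hb : 0 < k + 1 - x := by linarith
  rw [num, log_div (by positivity) (by nlinarith), log_mul (by positivity) (by positivity),
    log_mul (by positivity) (by positivity), log_mul (by nlinarith) hb.ne']
  ring_nf

theorem den_eq (hk : 0 < k) (hx : x < k + 1) :
    den k x = log k + log (k + 1) - 2 * log (k + 1 - x) := by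
  have hb : 0 < k + 1 - x := by linarith
  rw [den, log_div (by positivity) (by positivity), log_mul (by positivity) (by positivity),
    log_pow]
  norm_num

theorem num_div_den_le (hk : 0 < k) (hx₁ : 1 ≤ x) (hx : x < k + 1) :
    num k x / den k x ≤ (4 * k + 1) / (4 * k + 2) := by
  rw [div_le_div_iff₀ (den_pos hk hx₁ hx) (by positivity), num_eq hk hx, den_eq hk hx]
  set b := k + 1 - x
  have hb : 0 < b := by linarith
  have hmean : (4 * k * (b / k) + 2) / (4 * k + 2) = (2 * b + 1) / (2 * k + 1) := by
    field_simp
    ring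
  have hAMGM := mul_log_le_add_mul_log_weighted_mean (by positivity : (0 : ℝ) ≤ 4 * k)
    two_pos (div_pos hb hk)
  rw [hmean, log_div hb.ne' hk.ne', log_div (by positivity) (by positivity)] at hAMGM
  have hsq : log (4 * k * (k + 1)) ≤ log ((2 * k + 1) ^ 2) :=
    log_le_log (by positivity) (by nlinarith)
  rw [log_mul (by positivity) (by positivity), log_mul (by norm_num) hk.ne', log_pow] at hsq
  push_cast at hsq
  have hlog2k : log 2 + log k ≤ log (2 * k + 1) := by
    rw [← log_mul (by norm_num) hk.ne']
    exact log_le_log (by positivity) (by linarith)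
  have hlog4 : log 4 = 2 * log 2 := by
    rw [show (4 : ℝ) = 2 ^ 2 by norm_num, log_pow]
    norm_num
  linarith [mul_le_mul_of_nonneg_left hlog2k (by positivity : (0 : ℝ) ≤ 4 * k)]

end LogRatio

theorem critical_point_value_general (k : ℕ) (f : ℝ → ℝ)
    (hf : ∀ i : ℝ, f i =
      Real.log (2 * (k : ℝ) * (k + 1) / ((2 * (k : ℝ) + 3 - 2 * i) * ((k : ℝ) + 1 - i))) /
      Real.log ((k : ℝ) * (k + 1) / ((k : ℝ) + 1 - i) ^ 2)) :
    (∀ i ∈ Set.Icc (1 : ℝ) (k : ℝ), deriv f i = 0 →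
      f i = (4 * (k : ℝ) + 5 - 4 * i) / (2 * (2 * (k : ℝ) + 3 - 2 * i))) ∧
    (∀ i ∈ Set.Icc (1 : ℝ) (k : ℝ), f i ≤ (4 * (k : ℝ) + 1) / (4 * (k : ℝ) + 2)) := by
  obtain rfl : f = fun x => LogRatio.num k x / LogRatio.den k x := funext hf
  refine ⟨fun i ⟨hi₁, hik⟩ hd => ?_, fun i ⟨hi₁, hik⟩ => ?_⟩
  · exact LogRatio.num_div_den_of_deriv_eq_zero (by linarith) hi₁ (by linarith) hd
  · exact LogRatio.num_div_den_le (by linarith) hi₁ (by linarith)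

theorem critical_point_value (k : ℕ) (hk : 2 ≤ k) (f : ℝ → ℝ)
    (hf : ∀ i : ℝ, f i =
      Real.log (2 * (k : ℝ) * (k + 1) / ((2 * (k : ℝ) + 3 - 2 * i) * ((k : ℝ) + 1 - i))) /
      Real.log ((k : ℝ) * (k + 1) / ((k : ℝ) + 1 - i) ^ 2)) :
    (∀ i ∈ Set.Icc (1 : ℝ) (k : ℝ), deriv f i = 0 →
      f i = (4 * (k : ℝ) + 5 - 4 * i) / (2 * (2 * (k : ℝ) + 3 - 2 * i))) ∧
    (∀ i ∈ Set.Icc (1 : ℝ) (k : ℝ), f i ≤ (4 * (k : ℝ) + 1) / (4 * (k : ℝ) + 2)) :=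
  critical_point_value_general k f hf
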